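/- arXiv:1910.02534 — 6 statements merged into one kernel-verified Lean document; each statement's English description precedes it below -/
import Mathlib

section
/- Let K ≥ 1 and for each k ∈ {1,…,K} let 𝒴_k and 𝒰_k be finite nonempty types. Let (Y_1,…,Y_K,U_1,…,U_K) be random variables on a finite probability space whose joint probability mass function factorizes as P(Y = y, U = u) = P(Y = y) · Π_{k=1}^K r_k(u_k | y_k), where Y = (Y_1,…,Y_K), U = (U_1,…,U_K), and each r_k(·|y_k) is a probability mass function on 𝒰_k (i.e., conditionally on Y_k, U_k is independent of everything else). Then for all subsets B ⊆ A ⊆ {1,…,K}: I(Y^A; U^A) = I(Y^{A∖B}; U^{A∖B} | U^B) + I(Y^B; U^B), where Y^S denotes the tuple (Y_k)_{k∈S} and similarly for U^S. -/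
/-!
Under the product channel, `U^T` depends on everything else only through `Y^T`. Hence for any
`V` built from `Y` and from the `U k` with `k ∉ T` that determines `Y^T`, the chain rule gives
`H(V, U^T) = H(V) + H(U^T | Y^T)`. Taking `T = B` with `V = Y^A, Y^B` and `T = A ∖ B` with
`V = (Y^A, U^B), (Y^{A∖B}, U^B)`, both sides of the identity reduce to
`H(U^B | Y^B) + H(U^{A∖B} | Y^{A∖B})`.
-/

open scoped Classical

/-- Probability mass `P(f = a)` of the value `a` under the random variable `f` on a
finite space with probability mass function `p`. -/
noncomputable def pmfOf {Ω α : Type*} [Fintype Ω] (p : Ω → ℝ) (f : Ω → α) (a : α) : ℝ :=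
  ∑ ω, if f ω = a then p ω else 0

/-- Shannon entropy (natural logarithm) `H(f) = -∑ₐ P(f = a) log P(f = a)` of a random
variable `f` with finitely many values; the convention `0 · log 0 = 0` holds since
`Real.log 0 = 0`. -/
noncomputable def entropyOf {Ω α : Type*} [Fintype Ω] [Fintype α]
    (p : Ω → ℝ) (f : Ω → α) : ℝ :=
  -∑ a, pmfOf p f a * Real.log (pmfOf p f a)

/-- Mutual information `I(f; g) = H(f) + H(g) - H(f, g)`. -/
noncomputable def miOf {Ω α β : Type*} [Fintype Ω] [Fintype α] [Fintype β]
    (p : Ω → ℝ) (f : Ω → α) (g : Ω → β) : ℝ :=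
  entropyOf p f + entropyOf p g - entropyOf p (fun ω => (f ω, g ω))

/-- Conditional mutual information
`I(f; g | h) = H(f, h) + H(g, h) - H(f, g, h) - H(h)`. -/
noncomputable def cmiOf {Ω α β γ : Type*} [Fintype Ω] [Fintype α] [Fintype β] [Fintype γ]
    (p : Ω → ℝ) (f : Ω → α) (g : Ω → β) (h : Ω → γ) : ℝ :=
  entropyOf p (fun ω => (f ω, h ω)) + entropyOf p (fun ω => (g ω, h ω))
    - entropyOf p (fun ω => (f ω, g ω, h ω)) - entropyOf p h

open Finset Real

section PmfOf

variable {Ω α β γ : Type*} [Fintype Ω] (p : Ω → ℝ)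

theorem sum_pmfOf_mul [Fintype α] (f : Ω → α) (G : α → ℝ) :
    ∑ a, pmfOf p f a * G a = ∑ ω, p ω * G (f ω) := by
  simp only [pmfOf, sum_mul, ite_mul, zero_mul]
  rw [sum_comm]
  simp

theorem pmfOf_comp [Fintype α] (f : Ω → α) (h : α → β) (b : β) :
    pmfOf p (fun ω => h (f ω)) b = ∑ a, if h a = b then pmfOf p f a else 0 := by
  have h1 := sum_pmfOf_mul p f fun a => if h a = b then 1 else 0
  simp only [mul_ite, mul_one, mul_zero] at h1
  exact h1.symm

theorem sum_pmfOf_pair [Fintype β] (f : Ω → α) (g : Ω → β) (a : α) :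
    ∑ b, pmfOf p (fun ω => (f ω, g ω)) (a, b) = pmfOf p f a := by
  simp only [pmfOf, Prod.mk.injEq, ite_and]
  rw [sum_comm]
  simp

theorem pmfOf_comp_injective (f : Ω → α) {e : α → β} (he : e.Injective) (a : α) :
    pmfOf p (fun ω => e (f ω)) (e a) = pmfOf p f a := by
  simp only [pmfOf, he.eq_iff]

theorem pmfOf_eq_zero_of_notMem_range (f : Ω → α) {b : α} (hb : b ∉ Set.range f) :
    pmfOf p f b = 0 :=
  sum_eq_zero fun ω _ => if_neg fun h => hb ⟨ω, h⟩

theorem entropyOf_eq_sum_negMulLog [Fintype α] (f : Ω → α) :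
    entropyOf p f = ∑ a, negMulLog (pmfOf p f a) := by
  simp [entropyOf, negMulLog, sum_neg_distrib]

theorem entropyOf_comp_injective [Fintype α] [Fintype β] (f : Ω → α) {e : α → β}
    (he : e.Injective) : entropyOf p (fun ω => e (f ω)) = entropyOf p f := by
  simp only [entropyOf_eq_sum_negMulLog]
  refine (Fintype.sum_of_injective e he _ _ (fun b hb => ?_) fun a => ?_).symm
  · rw [pmfOf_eq_zero_of_notMem_range p _ fun ⟨ω, h⟩ => hb ⟨f ω, h⟩, negMulLog_zero]
  · rw [pmfOf_comp_injective p f he]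

theorem entropyOf_pair_eq_add [Fintype α] [Fintype β] (V : Ω → α) (W : Ω → β)
    (w : α → β → ℝ) (hw : ∀ a b, pmfOf p (fun ω => (V ω, W ω)) (a, b) = pmfOf p V a * w a b)
    (hw1 : ∀ a, ∑ b, w a b = 1) :
    entropyOf p (fun ω => (V ω, W ω))
      = entropyOf p V + ∑ ω, p ω * ∑ b, negMulLog (w (V ω) b) := by
  rw [← sum_pmfOf_mul p V fun a => ∑ b, negMulLog (w a b)]
  simp only [entropyOf_eq_sum_negMulLog, Fintype.sum_prod_type, hw, negMulLog_mul,
    sum_add_distrib, ← sum_mul, ← mul_sum, hw1, one_mul]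

theorem pmfOf_pair_comp_eq_mul [Fintype α] [Fintype β] (X : Ω → α) (W : Ω → β) (φ : α → γ)
    (w : γ → β → ℝ)
    (hw : ∀ x b, pmfOf p (fun ω => (X ω, W ω)) (x, b) = pmfOf p X x * w (φ x) b)
    (v : γ) (b : β) :
    pmfOf p (fun ω => (φ (X ω), W ω)) (v, b) = pmfOf p (fun ω => φ (X ω)) v * w v b := by
  rw [pmfOf_comp p (fun ω => (X ω, W ω)) (fun x => (φ x.1, x.2)), pmfOf_comp p X φ,
    Fintype.sum_prod_type, sum_mul]
  refine sum_congr rfl fun x _ => ?_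
  by_cases hx : φ x = v
  · simp [hx, hw]
  · simp [hx]

theorem entropyOf_pair_pair_comm [Fintype α] [Fintype β] [Fintype γ] (X : Ω → α) (Z : Ω → β)
    (W : Ω → γ) :
    entropyOf p (fun ω => ((X ω, Z ω), W ω)) = entropyOf p (fun ω => (X ω, W ω, Z ω)) :=
  entropyOf_comp_injective p (fun ω => (X ω, W ω, Z ω)) (e := fun x => ((x.1, x.2.2), x.2.1))
    fun x y h => by
      simp only [Prod.mk.injEq] at h
      exact Prod.ext h.1.1 (Prod.ext h.2 h.1.2)

end PmfOf

theorem sum_pi_prod_eq_one {κ : Type*} [Fintype κ] [DecidableEq κ] {𝒱 : κ → Type*}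
    [∀ k, Fintype (𝒱 k)] (f : ∀ k, 𝒱 k → ℝ) (hf : ∀ k, ∑ v, f k v = 1) :
    ∑ x : ∀ k, 𝒱 k, ∏ k, f k (x k) = 1 := by
  rw [← Fintype.prod_sum]
  simp [hf]

section ProductChannel

variable {Ω ι : Type*} [Fintype Ω] [Fintype ι] [DecidableEq ι] {𝒴 𝒰 : ι → Type*}
  [∀ k, Fintype (𝒰 k)] {p : Ω → ℝ} {Y : ∀ k, Ω → 𝒴 k} {U : ∀ k, Ω → 𝒰 k} {r : ∀ k, 𝒰 k → 𝒴 k → ℝ}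

theorem pmfOf_pair_restrict_eq_mul (hr1 : ∀ k y, ∑ u, r k u y = 1)
    (hfact : ∀ (y : ∀ k, 𝒴 k) (u : ∀ k, 𝒰 k),
      pmfOf p (fun ω => ((fun k => Y k ω), (fun k => U k ω))) (y, u)
        = pmfOf p (fun ω => fun k => Y k ω) y * ∏ k, r k (u k) (y k))
    (T : Finset ι) (y : ∀ k, 𝒴 k) (c : ∀ k : {k // k ∉ T}, 𝒰 k) (b : ∀ k : T, 𝒰 k) :
    pmfOf p (fun ω => (((fun k => Y k ω), fun k : {k // k ∉ T} => U k ω), fun k : T => U k ω))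
        ((y, c), b)
      = pmfOf p (fun ω => ((fun k => Y k ω), fun k : {k // k ∉ T} => U k ω)) (y, c)
          * ∏ k : T, r k (b k) (y k) := by
  set e := Equiv.piEquivPiSubtypeProd (· ∈ T) 𝒰
  have hjoint : ∀ b : ∀ k : T, 𝒰 k, pmfOf p
      (fun ω => (((fun k => Y k ω), fun k : {k // k ∉ T} => U k ω), fun k : T => U k ω))
        ((y, c), b)
      = pmfOf p (fun ω k => Y k ω) y
          * ((∏ k : T, r k (b k) (y k)) * ∏ k : {k // k ∉ T}, r k (c k) (y k)) := by
    intro b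
    have he : Function.Injective
        fun x : (∀ k, 𝒴 k) × (∀ k, 𝒰 k) => ((x.1, (e x.2).2), (e x.2).1) := by
      intro x x' h
      simp only [Prod.mk.injEq] at h
      exact Prod.ext h.1.1 (e.injective (Prod.ext h.2 h.1.2))
    have h := pmfOf_comp_injective p (fun ω => ((fun k => Y k ω), fun k => U k ω)) he
      (y, e.symm (b, c))
    simp only [Equiv.apply_symm_apply] at h
    refine h.trans ?_
    rw [hfact, ← prod_mul_prod_compl T, ← prod_coe_sort T,
      prod_subtype Tᶜ (fun _ => mem_compl)]
    congr 2
    · exact Fintype.prod_congr _ _ fun k => by simp [e]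
    · exact Fintype.prod_congr _ _ fun k => by simp [e, k.2]
  rw [← sum_pmfOf_pair p _ (fun ω (k : T) => U k ω) (y, c)]
  simp only [hjoint, ← mul_sum, ← sum_mul]
  rw [sum_pi_prod_eq_one (fun (k : T) v => r k v (y k)) fun k => hr1 k (y k)]
  ring

variable (p Y r) in
/-- `H(U^T | Y^T)` when `U^T` is obtained from `Y^T` through the channel `∏ k ∈ T, r k`. -/
noncomputable def channelCondEntropy (T : Finset ι) : ℝ :=
  ∑ ω, p ω * ∑ b : ∀ k : T, 𝒰 k, negMulLog (∏ k : T, r k (b k) (Y k ω))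

theorem entropyOf_pair_restrict_eq_add [∀ k, Fintype (𝒴 k)] {γ : Type*} [Fintype γ]
    (hr1 : ∀ k y, ∑ u, r k u y = 1)
    (hfact : ∀ (y : ∀ k, 𝒴 k) (u : ∀ k, 𝒰 k),
      pmfOf p (fun ω => ((fun k => Y k ω), (fun k => U k ω))) (y, u)
        = pmfOf p (fun ω => fun k => Y k ω) y * ∏ k, r k (u k) (y k))
    (T : Finset ι) (φ : (∀ k, 𝒴 k) × (∀ k : {k // k ∉ T}, 𝒰 k) → γ)
    (ψ : γ → ∀ k : T, 𝒴 k) (hψ : ∀ x, ψ (φ x) = fun k : T => x.1 k) :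
    entropyOf p (fun ω => (φ ((fun k => Y k ω), fun k => U k ω), fun k : T => U k ω))
      = entropyOf p (fun ω => φ ((fun k => Y k ω), fun k => U k ω))
        + channelCondEntropy p Y r T := by
  have hw := pmfOf_pair_comp_eq_mul p _ _ φ (fun v (b : ∀ k : T, 𝒰 k) => ∏ k : T, r k (b k) (ψ v k))
    fun x b => by rw [hψ]; exact pmfOf_pair_restrict_eq_mul hr1 hfact T x.1 x.2 b
  rw [entropyOf_pair_eq_add p _ _ _ hw fun v =>
    sum_pi_prod_eq_one (fun (k : T) u => r k u (ψ v k)) fun k => hr1 k _]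
  simp only [hψ, channelCondEntropy]

end ProductChannel

section Restrict

variable {Ω ι α : Type*} [Fintype Ω] [DecidableEq ι] {β : ι → Type*}

theorem Finset.restrict_sdiff_prod_restrict_injective {A B : Finset ι} (hBA : B ⊆ A) :
    Function.Injective fun u : ∀ k : A, β k =>
      (fun k : ↥(A \ B) => u ⟨k, sdiff_subset k.2⟩, fun k : B => u ⟨k, hBA k.2⟩) := by
  intro u v h
  simp only [Prod.mk.injEq, funext_iff] at h
  funext k
  by_cases hk : k.1 ∈ B
  · exact h.2 ⟨k, hk⟩
  · exact h.1 ⟨k, mem_sdiff.2 ⟨k.2, hk⟩⟩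

variable [∀ k, Fintype (β k)] (p : Ω → ℝ) (U : ∀ k, Ω → β k) {A B : Finset ι}

theorem entropyOf_restrict_sdiff_prod_restrict (hBA : B ⊆ A) :
    entropyOf p (fun ω => ((fun k : ↥(A \ B) => U k ω), fun k : B => U k ω))
      = entropyOf p (fun ω (k : A) => U k ω) :=
  entropyOf_comp_injective p (fun ω (k : A) => U k ω) (restrict_sdiff_prod_restrict_injective hBA)

theorem entropyOf_pair_restrict_prod_restrict_sdiff [Fintype α] (V : Ω → α) (hBA : B ⊆ A) :
    entropyOf p (fun ω => ((V ω, fun k : B => U k ω), fun k : ↥(A \ B) => U k ω))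
      = entropyOf p (fun ω => (V ω, fun k : A => U k ω)) :=
  entropyOf_comp_injective p (fun ω => (V ω, fun k : A => U k ω))
    (e := fun x => ((x.1, fun k : B => x.2 ⟨k, hBA k.2⟩),
      fun k : ↥(A \ B) => x.2 ⟨k, sdiff_subset k.2⟩))
    fun x y h => by
      simp only [Prod.mk.injEq] at h
      exact Prod.ext h.1.1 (restrict_sdiff_prod_restrict_injective hBA (Prod.ext h.2 h.1.2))

end Restrict

theorem stmt3_general {Ω : Type*} [Fintype Ω]
    (K : ℕ)
    (𝒴 𝒰 : Fin K → Type*)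
    [∀ k, Fintype (𝒴 k)] [∀ k, Fintype (𝒰 k)]
    (p : Ω → ℝ)
    (Y : ∀ k, Ω → 𝒴 k) (U : ∀ k, Ω → 𝒰 k)
    (r : ∀ k, 𝒰 k → 𝒴 k → ℝ)
    (hr1 : ∀ k y, ∑ u, r k u y = 1)
    (hfact : ∀ (y : ∀ k, 𝒴 k) (u : ∀ k, 𝒰 k),
      pmfOf p (fun ω => ((fun k => Y k ω), (fun k => U k ω))) (y, u)
        = pmfOf p (fun ω => fun k => Y k ω) y * ∏ k, r k (u k) (y k)) :
    ∀ A B : Finset (Fin K), B ⊆ A →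
      miOf p (fun ω (k : {x // x ∈ A}) => Y k ω) (fun ω (k : {x // x ∈ A}) => U k ω)
        = cmiOf p (fun ω (k : {x // x ∈ A \ B}) => Y k ω)
            (fun ω (k : {x // x ∈ A \ B}) => U k ω)
            (fun ω (k : {x // x ∈ B}) => U k ω)
          + miOf p (fun ω (k : {x // x ∈ B}) => Y k ω)
              (fun ω (k : {x // x ∈ B}) => U k ω) := by
  intro A B hBA
  have hB : ∀ k ∈ B, k ∉ A \ B := fun k hk hk' => (mem_sdiff.1 hk').2 hk
  have hYA_UB := entropyOf_pair_restrict_eq_add hr1 hfact B (fun x (k : A) => x.1 k)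
    (fun a k => a ⟨k, hBA k.2⟩) fun _ => rfl
  have hYB_UB := entropyOf_pair_restrict_eq_add hr1 hfact B (fun x (k : B) => x.1 k)
    (fun a k => a k) fun _ => rfl
  have hYAUB_UD := entropyOf_pair_restrict_eq_add hr1 hfact (A \ B)
    (fun x => ((fun k : A => x.1 k), fun k : B => x.2 ⟨k, hB k k.2⟩))
    (fun v k => v.1 ⟨k, sdiff_subset k.2⟩) fun _ => rfl
  have hYDUB_UD := entropyOf_pair_restrict_eq_add hr1 hfact (A \ B)
    (fun x => ((fun k : ↥(A \ B) => x.1 k), fun k : B => x.2 ⟨k, hB k k.2⟩))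
    (fun v k => v.1 k) fun _ => rfl
  have hUA := entropyOf_restrict_sdiff_prod_restrict p U hBA
  have hYAUA := entropyOf_pair_restrict_prod_restrict_sdiff p U (fun ω (k : A) => Y k ω) hBA
  have hYDUA := entropyOf_pair_pair_comm p (fun ω (k : ↥(A \ B)) => Y k ω)
    (fun ω (k : B) => U k ω) (fun ω (k : ↥(A \ B)) => U k ω)
  simp only [miOf, cmiOf]
  linarith

/-- Let `K ≥ 1` and for each `k` let `𝒴 k` and `𝒰 k` be finite nonempty
types.  Let `(Y, U)` be random variables on a finite probability space whose joint pmf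
factorizes as `P(Y = y, U = u) = P(Y = y) · ∏ₖ r k (u k) (y k)` with each `r k (·|yₖ)`
a pmf on `𝒰 k` (conditionally on `Y k`, `U k` is independent of everything else).
Then for all subsets `B ⊆ A ⊆ {1, …, K}`:
`I(Y^A; U^A) = I(Y^{A∖B}; U^{A∖B} | U^B) + I(Y^B; U^B)`. -/
theorem stmt3 {Ω : Type*} [Fintype Ω]
    (K : ℕ) (hK : 1 ≤ K)
    (𝒴 𝒰 : Fin K → Type*)
    [∀ k, Fintype (𝒴 k)] [∀ k, Fintype (𝒰 k)]
    [∀ k, Nonempty (𝒴 k)] [∀ k, Nonempty (𝒰 k)]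
    (p : Ω → ℝ) (hp0 : ∀ ω, 0 ≤ p ω) (hp1 : ∑ ω, p ω = 1)
    (Y : ∀ k, Ω → 𝒴 k) (U : ∀ k, Ω → 𝒰 k)
    (r : ∀ k, 𝒰 k → 𝒴 k → ℝ)
    (hr0 : ∀ k u y, 0 ≤ r k u y) (hr1 : ∀ k y, ∑ u, r k u y = 1)
    (hfact : ∀ (y : ∀ k, 𝒴 k) (u : ∀ k, 𝒰 k),
      pmfOf p (fun ω => ((fun k => Y k ω), (fun k => U k ω))) (y, u)
        = pmfOf p (fun ω => fun k => Y k ω) y * ∏ k, r k (u k) (y k)) :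
    ∀ A B : Finset (Fin K), B ⊆ A →
      miOf p (fun ω (k : {x // x ∈ A}) => Y k ω) (fun ω (k : {x // x ∈ A}) => U k ω)
        = cmiOf p (fun ω (k : {x // x ∈ A \ B}) => Y k ω)
            (fun ω (k : {x // x ∈ A \ B}) => U k ω)
            (fun ω (k : {x // x ∈ B}) => U k ω)
          + miOf p (fun ω (k : {x // x ∈ B}) => Y k ω)
              (fun ω (k : {x // x ∈ B}) => U k ω) :=
  stmt3_general K 𝒴 𝒰 p Y U r hr1 hfact
end

section
/- Let K ≥ 1, let a ∈ ℝ with |a| < 1, let v > 0, and set σ² = v/(1 − a²). Let s ∈ (0, σ²), define m by 1/m = K/s − (K−1)/σ², and let d satisfy m < d < σ². Define d* by 1/d* = (K−1)/(K·σ²) + 1/(K·d), and define f(x) = (1/2)·log( ((a²x + v − s)/(x − s)) · (x/(a²x + v)) ) for x ∈ (s, ∞). Then: (i) s < d* < σ² and 1/d* = 1/s + (1/K)(1/d − 1/m); and (ii) the minimum of Σ_{k=1}^K f(d_k) over all (d_1, …, d_K) satisfying s ≤ d_k ≤ σ² for every k and 1/d ≤ 1/m − Σ_{k=1}^K (1/s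 − 1/d_k) is attained at d_1 = ⋯ = d_K = d* and equals K·f(d*). -/
/-- The per-observer rate term
`f x = (1/2) * log (((a² x + v - s)/(x - s)) * (x/(a² x + v)))` of the causal Gaussian
CEO problem, as an extended-real-valued function: for `x ≤ s` the term
`(a² x + v - s)/(x - s)` blows up (division by `0⁺` at `x = s`), and by the usual
continuity convention the value there is `+∞`. -/
noncomputable def ceoRateTerm (a v s x : ℝ) : EReal :=
  if s < x then
    (((1 / 2) * Real.log (((a ^ 2 * x + v - s) / (x - s)) * (x / (a ^ 2 * x + v)))) : ℝ)
  else ⊤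

/-! In the variable `y = 1 / x` the rate term becomes
`g y = (log (a² + (v - s) y) - log (1 - s y) - log (a² + v y)) / 2`, which is convex and
nondecreasing on `[1/σ², 1/s)`, while the distortion constraint becomes linear:
`∑ₖ yₖ ≥ K / d*`. The tangent line of `g` at `1 / d*` therefore gives
`∑ₖ g yₖ ≥ K g (1/d*) + g' (1/d*) (∑ₖ yₖ - K / d*) ≥ K g (1/d*)`. Allocations with some
`dₖ ≤ s` have infinite rate. -/

open Real Set Finset

theorem EReal.coe_finset_sum {ι : Type*} (t : Finset ι) (f : ι → ℝ) :
    ((∑ i ∈ t, f i : ℝ) : EReal) = ∑ i ∈ t, (f i : EReal) :=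
  map_sum (⟨⟨Real.toEReal, EReal.coe_zero⟩, EReal.coe_add⟩ : ℝ →+ EReal) f t

theorem EReal.sum_eq_top_of_ne_bot {ι : Type*} {t : Finset ι} {f : ι → EReal}
    (hbot : ∀ i ∈ t, f i ≠ ⊥) {i : ι} (hi : i ∈ t) (htop : f i = ⊤) : ∑ j ∈ t, f j = ⊤ := by
  classical
  rw [← Finset.add_sum_erase t f hi, htop]
  refine EReal.top_add_of_ne_bot (Finset.sum_induction f (· ≠ ⊥) ?_ ?_ ?_)
  · exact fun _ _ hx hy => EReal.add_ne_bot_iff.2 ⟨hx, hy⟩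
  · exact EReal.zero_ne_bot
  · exact fun j hj => hbot j (Finset.mem_of_mem_erase hj)

theorem ConvexOn.add_mul_sub_le_of_hasDerivAt {S : Set ℝ} {g : ℝ → ℝ} {y₀ c y : ℝ}
    (hg : ConvexOn ℝ S g) (hy₀ : y₀ ∈ S) (hy : y ∈ S) (hc : HasDerivAt g c y₀) :
    g y₀ + c * (y - y₀) ≤ g y := by
  rcases lt_trichotomy y y₀ with h | rfl | h
  · have := hg.slope_le_of_hasDerivAt hy hy₀ h hc
    rw [slope_def_field, div_le_iff₀ (sub_pos.2 h)] at this
    linarith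
  · simp
  · have := hg.le_slope_of_hasDerivAt hy₀ hy h hc
    rw [slope_def_field, le_div_iff₀ (sub_pos.2 h)] at this
    linarith

theorem ConvexOn.card_mul_le_sum_of_hasDerivAt {ι : Type*} {S : Set ℝ} {g : ℝ → ℝ} {y₀ c : ℝ}
    (hg : ConvexOn ℝ S g) (hy₀ : y₀ ∈ S) (hc : HasDerivAt g c y₀) (hc0 : 0 ≤ c)
    {t : Finset ι} {y : ι → ℝ} (hy : ∀ i ∈ t, y i ∈ S) (hsum : #t * y₀ ≤ ∑ i ∈ t, y i) :
    #t * g y₀ ≤ ∑ i ∈ t, g (y i) :=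
  calc #t * g y₀ ≤ #t * g y₀ + c * (∑ i ∈ t, y i - #t * y₀) :=
        le_add_of_nonneg_right (mul_nonneg hc0 (sub_nonneg.2 hsum))
    _ = ∑ i ∈ t, (g y₀ + c * (y i - y₀)) := by
        rw [Finset.sum_add_distrib, ← Finset.mul_sum, Finset.sum_sub_distrib]
        simp [nsmul_eq_mul]
    _ ≤ ∑ i ∈ t, g (y i) :=
        Finset.sum_le_sum fun i hi => hg.add_mul_sub_le_of_hasDerivAt hy₀ (hy i hi) hc

noncomputable def ceoRateInv (a v s y : ℝ) : ℝ :=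
  (log (a ^ 2 + (v - s) * y) - log (1 - s * y) - log (a ^ 2 + v * y)) / 2

noncomputable def ceoRateInvDeriv (a v s y : ℝ) : ℝ :=
  ((v - s) / (a ^ 2 + (v - s) * y) + s / (1 - s * y) - v / (a ^ 2 + v * y)) / 2

noncomputable def ceoRateInvDeriv2 (a v s y : ℝ) : ℝ :=
  (s ^ 2 / (1 - s * y) ^ 2 + v ^ 2 / (a ^ 2 + v * y) ^ 2
    - (v - s) ^ 2 / (a ^ 2 + (v - s) * y) ^ 2) / 2

section

variable {a v s y : ℝ}

theorem hasDerivAt_ceoRateInv (hq : a ^ 2 + (v - s) * y ≠ 0) (ht : 1 - s * y ≠ 0)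
    (hp : a ^ 2 + v * y ≠ 0) : HasDerivAt (ceoRateInv a v s) (ceoRateInvDeriv a v s y) y := by
  have hlin (b c : ℝ) := ((hasDerivAt_id' y).const_mul c).const_add b
  have := ((((hlin _ _).log hq).sub
    ((((hasDerivAt_id' y).const_mul s).const_sub 1).log ht)).sub ((hlin _ _).log hp)).div_const 2
  refine this.congr_deriv ?_
  unfold ceoRateInvDeriv
  ring

theorem hasDerivAt_ceoRateInvDeriv (hq : a ^ 2 + (v - s) * y ≠ 0) (ht : 1 - s * y ≠ 0)
    (hp : a ^ 2 + v * y ≠ 0) :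
    HasDerivAt (ceoRateInvDeriv a v s) (ceoRateInvDeriv2 a v s y) y := by
  have hlin (b c : ℝ) := ((hasDerivAt_id' y).const_mul c).const_add b
  have := ((((hasDerivAt_const y (v - s)).div (hlin _ _) hq).add
    ((hasDerivAt_const y s).div (((hasDerivAt_id' y).const_mul s).const_sub 1) ht)).sub
    ((hasDerivAt_const y v).div (hlin _ _) hp)).div_const 2
  refine this.congr_deriv ?_
  unfold ceoRateInvDeriv2
  field_simp
  ring

theorem ceoRateInv_domain (hv : 0 < v) (hs : 0 < s) (hy : y ∈ Ico ((1 - a ^ 2) / v) (1 / s)) :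
    0 < 1 - s * y ∧ 1 ≤ a ^ 2 + v * y ∧ 1 - s * y ≤ a ^ 2 + (v - s) * y := by
  have h₁ : y * s < 1 := (lt_div_iff₀ hs).1 hy.2
  have h₂ : 1 - a ^ 2 ≤ y * v := (div_le_iff₀ hv).1 hy.1
  refine ⟨?_, ?_, ?_⟩ <;> linarith

theorem ceoRateInv_denoms_ne_zero (hv : 0 < v) (hs : 0 < s)
    (hy : y ∈ Ico ((1 - a ^ 2) / v) (1 / s)) :
    a ^ 2 + (v - s) * y ≠ 0 ∧ 1 - s * y ≠ 0 ∧ a ^ 2 + v * y ≠ 0 := by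
  obtain ⟨ht, hp, htq⟩ := ceoRateInv_domain hv hs hy
  exact ⟨(ht.trans_le htq).ne', ht.ne', by linarith⟩

theorem ceoRateInvDeriv2_nonneg (hv : 0 < v) (hs : 0 < s)
    (hy : y ∈ Ico ((1 - a ^ 2) / v) (1 / s)) : 0 ≤ ceoRateInvDeriv2 a v s y := by
  obtain ⟨ht, hp, htq⟩ := ceoRateInv_domain hv hs hy
  have hq : 0 < a ^ 2 + (v - s) * y := ht.trans_le htq
  refine div_nonneg ?_ zero_le_two
  simp only [← div_pow]
  -- `|v - s| / (a² + (v - s) y)` is dominated by `v / (a² + v y)` if `s ≤ v`,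
  -- and by `s / (1 - s y)` if `v ≤ s`.
  rcases le_total s v with hsv | hvs
  · have : (v - s) / (a ^ 2 + (v - s) * y) ≤ v / (a ^ 2 + v * y) := by
      rw [div_le_div_iff₀ hq (by linarith)]
      nlinarith [mul_nonneg hs.le (sq_nonneg a)]
    have := pow_le_pow_left₀ (div_nonneg (sub_nonneg.2 hsv) hq.le) this 2
    nlinarith [sq_nonneg (s / (1 - s * y))]
  · have : (s - v) / (a ^ 2 + (v - s) * y) ≤ s / (1 - s * y) :=
      div_le_div₀ hs.le (by linarith) ht htq
    have := pow_le_pow_left₀ (div_nonneg (sub_nonneg.2 hvs) hq.le) this 2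
    rw [show (v - s) / (a ^ 2 + (v - s) * y) = -((s - v) / (a ^ 2 + (v - s) * y)) by ring,
      neg_sq]
    nlinarith [sq_nonneg (v / (a ^ 2 + v * y))]

theorem convexOn_ceoRateInv (hv : 0 < v) (hs : 0 < s) :
    ConvexOn ℝ (Ico ((1 - a ^ 2) / v) (1 / s)) (ceoRateInv a v s) := by
  have hne := fun y hy => ceoRateInv_denoms_ne_zero (a := a) (y := y) hv hs hy
  refine convexOn_of_hasDerivWithinAt2_nonneg (f' := ceoRateInvDeriv a v s)
    (f'' := ceoRateInvDeriv2 a v s) (convex_Ico _ _) (fun y hy => ?_) (fun y hy => ?_)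
    (fun y hy => ?_) (fun y hy => ceoRateInvDeriv2_nonneg hv hs (interior_subset hy))
  · obtain ⟨hq, ht, hp⟩ := hne y hy
    exact (hasDerivAt_ceoRateInv hq ht hp).continuousAt.continuousWithinAt
  · obtain ⟨hq, ht, hp⟩ := hne y (interior_subset hy)
    exact (hasDerivAt_ceoRateInv hq ht hp).hasDerivWithinAt
  · obtain ⟨hq, ht, hp⟩ := hne y (interior_subset hy)
    exact (hasDerivAt_ceoRateInvDeriv hq ht hp).hasDerivWithinAt

theorem ceoRateInvDeriv_nonneg (hv : 0 < v) (hs : 0 < s) (ha : a ^ 2 ≤ 1)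
    (hy : y ∈ Ico ((1 - a ^ 2) / v) (1 / s)) : 0 ≤ ceoRateInvDeriv a v s y := by
  obtain ⟨ht, hp, htq⟩ := ceoRateInv_domain hv hs hy
  have hq : 0 < a ^ 2 + (v - s) * y := ht.trans_le htq
  have hpq : 1 - s * y ≤ (a ^ 2 + v * y) * (a ^ 2 + (v - s) * y) := by nlinarith
  have : ceoRateInvDeriv a v s y = s * ((a ^ 2 + v * y) * (a ^ 2 + (v - s) * y)
      - a ^ 2 * (1 - s * y)) / ((1 - s * y) * (a ^ 2 + v * y) * (a ^ 2 + (v - s) * y)) / 2 := by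
    unfold ceoRateInvDeriv
    field_simp
    ring
  rw [this]
  have : 0 ≤ (a ^ 2 + v * y) * (a ^ 2 + (v - s) * y) - a ^ 2 * (1 - s * y) := by nlinarith
  positivity

variable {x : ℝ}

theorem ceoRateTerm_eq_ceoRateInv (hs : 0 < s) (hx : s < x) (hq : s < a ^ 2 * x + v) :
    ceoRateTerm a v s x = (ceoRateInv a v s (1 / x) : EReal) := by
  have hx0 : 0 < x := hs.trans hx
  have hp : 0 < a ^ 2 * x + v := by linarith
  have hq' : a ^ 2 + (v - s) * (1 / x) = (a ^ 2 * x + v - s) / x := by field_simp; ring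
  have ht' : 1 - s * (1 / x) = (x - s) / x := by field_simp
  have hp' : a ^ 2 + v * (1 / x) = (a ^ 2 * x + v) / x := by field_simp
  rw [ceoRateTerm, if_pos hx, ceoRateInv, hq', ht', hp', EReal.coe_eq_coe_iff,
    log_mul (div_ne_zero (by linarith) (by linarith)) (div_ne_zero hx0.ne' hp.ne'),
    log_div (by linarith) (by linarith), log_div hx0.ne' hp.ne', log_div (by linarith) hx0.ne',
    log_div (by linarith) hx0.ne', log_div hp.ne' hx0.ne']
  ring

theorem ceoRateTerm_ne_bot : ceoRateTerm a v s x ≠ ⊥ := by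
  unfold ceoRateTerm
  split_ifs
  exacts [EReal.coe_ne_bot _, top_ne_bot]

theorem one_div_mem_Ico (hs : 0 < s) (hsx : s < x)
    (hxσ : x ≤ v / (1 - a ^ 2)) : 1 / x ∈ Ico ((1 - a ^ 2) / v) (1 / s) := by
  refine ⟨?_, one_div_lt_one_div_of_lt hs hsx⟩
  rw [← one_div_div]
  exact one_div_le_one_div_of_le (hs.trans hsx) hxσ

theorem lt_sq_mul_add_of_le_div (ha : a ^ 2 < 1) (hsx : s < x) (hxσ : x ≤ v / (1 - a ^ 2)) :
    s < a ^ 2 * x + v := by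
  have := (le_div_iff₀ (sub_pos.2 ha)).1 hxσ
  linarith

theorem card_mul_ceoRateTerm_le_sum {ι : Type*} {t : Finset ι} {z : ι → ℝ}
    (hv : 0 < v) (hs : 0 < s) (ha : a ^ 2 < 1) (hsx : s < x) (hxσ : x ≤ v / (1 - a ^ 2))
    (hz : ∀ i ∈ t, z i ≤ v / (1 - a ^ 2)) (hsum : #t * (1 / x) ≤ ∑ i ∈ t, 1 / z i) :
    (#t : EReal) * ceoRateTerm a v s x ≤ ∑ i ∈ t, ceoRateTerm a v s (z i) := by
  by_cases hall : ∀ i ∈ t, s < z i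
  · rw [ceoRateTerm_eq_ceoRateInv hs hsx (lt_sq_mul_add_of_le_div ha hsx hxσ),
      Finset.sum_congr rfl fun i hi => ceoRateTerm_eq_ceoRateInv hs (hall i hi)
        (lt_sq_mul_add_of_le_div ha (hall i hi) (hz i hi)),
      ← EReal.coe_finset_sum, ← EReal.coe_coe_eq_natCast, ← EReal.coe_mul, EReal.coe_le_coe_iff]
    have hx := one_div_mem_Ico hs hsx hxσ
    obtain ⟨hq, ht, hp⟩ := ceoRateInv_denoms_ne_zero hv hs hx
    exact (convexOn_ceoRateInv hv hs).card_mul_le_sum_of_hasDerivAt hx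
      (hasDerivAt_ceoRateInv hq ht hp) (ceoRateInvDeriv_nonneg hv hs ha.le hx)
      (fun i hi => one_div_mem_Ico hs (hall i hi) (hz i hi)) hsum
  · push Not at hall
    obtain ⟨i, hi, hzi⟩ := hall
    rw [EReal.sum_eq_top_of_ne_bot (fun _ _ => ceoRateTerm_ne_bot) hi
      (by rw [ceoRateTerm, if_neg hzi.not_gt])]
    exact le_top

end

theorem dstar_bounds_and_one_div_eq {K σ2 s m d dstar : ℝ} (hK : 1 ≤ K) (hs : 0 < s)
    (hsσ : s < σ2) (hm : 1 / m = K / s - (K - 1) / σ2) (hmd : m < d) (hdσ : d < σ2)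
    (hdstar : 1 / dstar = (K - 1) / (K * σ2) + 1 / (K * d)) :
    s < dstar ∧ dstar < σ2 ∧ 1 / dstar = 1 / s + (1 / K) * (1 / d - 1 / m) := by
  have hσ : 0 < σ2 := hs.trans hsσ
  have hσs : 1 / σ2 < 1 / s := one_div_lt_one_div_of_lt hs hsσ
  have hm0 : 0 < m := by
    rw [← one_div_pos, hm,
      show K / s - (K - 1) / σ2 = 1 / s + (K - 1) * (1 / s - 1 / σ2) by ring]
    have : 0 ≤ (K - 1) * (1 / s - 1 / σ2) := mul_nonneg (by linarith) (by linarith)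
    positivity
  have hd : 0 < d := hm0.trans hmd
  have hid : 1 / dstar = 1 / s + (1 / K) * (1 / d - 1 / m) := by
    rw [hdstar, hm]
    field_simp
    ring
  have hlow : 1 / σ2 < 1 / dstar := by
    rw [show 1 / dstar = 1 / σ2 + (1 / K) * (1 / d - 1 / σ2) by rw [hdstar]; field_simp; ring]
    have := one_div_lt_one_div_of_lt hd hdσ
    have : 0 < 1 / K := by positivity
    nlinarith
  have hup : 1 / dstar < 1 / s := by
    have := one_div_lt_one_div_of_lt hm0 hmd
    have : 0 < 1 / K := by positivity
    nlinarith
  have hds : 0 < dstar := one_div_pos.1 ((one_div_pos.2 hσ).trans hlow)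
  exact ⟨(one_div_lt_one_div hds hs).1 hup, (one_div_lt_one_div hσ hds).1 hlow, hid⟩

/-- Symmetric-channels causal Gaussian CEO sum-rate minimization.
Let `K ≥ 1`, `|a| < 1`, `v > 0`, `σ² = v/(1-a²)`, `s ∈ (0, σ²)`,
`1/m = K/s - (K-1)/σ²`, and `m < d < σ²`.  Define `d*` by
`1/d* = (K-1)/(K σ²) + 1/(K d)`.  Then (i) `s < d* < σ²` and
`1/d* = 1/s + (1/K)(1/d - 1/m)`; moreover the constant allocation `d₁ = ⋯ = d_K = d*`
is feasible, and (ii) the minimum of `∑ₖ f (d k)` over all `(d₁, …, d_K)` with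
`s ≤ d k ≤ σ²` and `1/d ≤ 1/m - ∑ₖ (1/s - 1/(d k))` is attained at
`d₁ = ⋯ = d_K = d*` and equals `K · f d*`. -/
theorem stmt6 (K : ℕ) (hK : 1 ≤ K) (a v : ℝ) (ha : |a| < 1) (hv : 0 < v)
    (σ2 : ℝ) (hσ2 : σ2 = v / (1 - a ^ 2))
    (s : ℝ) (hs0 : 0 < s) (hsσ : s < σ2)
    (m : ℝ) (hm : 1 / m = (K : ℝ) / s - ((K : ℝ) - 1) / σ2)
    (d : ℝ) (hmd : m < d) (hdσ : d < σ2)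
    (dstar : ℝ)
    (hdstar : 1 / dstar = ((K : ℝ) - 1) / ((K : ℝ) * σ2) + 1 / ((K : ℝ) * d)) :
    (s < dstar ∧ dstar < σ2 ∧
      1 / dstar = 1 / s + (1 / (K : ℝ)) * (1 / d - 1 / m)) ∧
    (s ≤ dstar ∧ dstar ≤ σ2 ∧
      1 / d ≤ 1 / m - ∑ _k : Fin K, (1 / s - 1 / dstar)) ∧
    IsLeast {r : EReal | ∃ dk : Fin K → ℝ,
        (∀ k, s ≤ dk k ∧ dk k ≤ σ2) ∧
        1 / d ≤ 1 / m - ∑ k, (1 / s - 1 / dk k) ∧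
        r = ∑ k, ceoRateTerm a v s (dk k)}
      ((K : EReal) * ceoRateTerm a v s dstar) := by
  obtain ⟨hsd, hdσ', hid⟩ :=
    dstar_bounds_and_one_div_eq (by exact_mod_cast hK) hs0 hsσ hm hmd hdσ hdstar
  have hK0 : (K : ℝ) ≠ 0 := by positivity
  have hfeas : ∑ _k : Fin K, (1 / s - 1 / dstar) = 1 / m - 1 / d := by
    rw [sum_const, card_univ, Fintype.card_fin, nsmul_eq_mul, hid]
    field_simp
    ring
  refine ⟨⟨hsd, hdσ', hid⟩, ⟨hsd.le, hdσ'.le, by rw [hfeas]; simp⟩,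
    ⟨fun _ => dstar, fun _ => ⟨hsd.le, hdσ'.le⟩, by rw [hfeas]; simp, ?_⟩, ?_⟩
  · rw [sum_const, card_univ, Fintype.card_fin, EReal.nsmul_eq_mul]
  rintro r ⟨z, hz, hcon, rfl⟩
  have hconstraint : #(univ : Finset (Fin K)) * (1 / dstar) ≤ ∑ k, 1 / z k := by
    have : ∑ k, (1 / s - 1 / z k) = K * (1 / s) - ∑ k, 1 / z k := by
      rw [sum_sub_distrib, sum_const, card_univ, Fintype.card_fin, nsmul_eq_mul]
    rw [card_univ, Fintype.card_fin, hid, mul_add, ← mul_assoc, mul_one_div_cancel hK0, one_mul]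
    linarith
  subst hσ2
  simpa using card_mul_ceoRateTerm_le_sum hv hs0 ((sq_lt_one_iff_abs_lt_one a).2 ha)
    hsd hdσ'.le (fun k _ => (hz k).2) hconstraint
end

section
/- Let K ≥ 1, let σ² > 0, and let s_1, …, s_K satisfy 0 < s_k < σ² for every k. Define m by 1/m = Σ_{k=1}^K 1/s_k − (K−1)/σ², and let d satisfy m < d < σ². Then m > 0, and there exists a unique λ > 0 such that Σ_{k=1}^K min{ 1/λ, 1/s_k − 1/σ² } = 1/m − 1/d. Moreover, for this λ, the numbers d_k defined by 1/d_k = 1/s_k − min{ 1/λ, 1/s_k − 1/σ² } satisfy s_k ≤ d_k ≤ σ² for every k, and 1/d = Σ_{k=1}^K 1/d_k − (K−1)/σ². -/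
/-- Waterfilling rate allocation for the causal Gaussian CEO problem.
Let `K ≥ 1`, `σ² > 0`, `0 < s k < σ²` for every `k`, define `m` by
`1/m = ∑ₖ 1/(s k) - (K-1)/σ²`, and let `m < d < σ²`.  Then `m > 0`, there is a unique
`λ > 0` with `∑ₖ min (1/λ) (1/(s k) - 1/σ²) = 1/m - 1/d`, and for this `λ` the numbers
`d k` defined by `1/(d k) = 1/(s k) - min (1/λ) (1/(s k) - 1/σ²)` satisfy
`s k ≤ d k ≤ σ²` for every `k` and `1/d = ∑ₖ 1/(d k) - (K-1)/σ²`. -/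
theorem stmt7 (K : ℕ) (hK : 1 ≤ K) (σ2 : ℝ) (hσ2 : 0 < σ2)
    (s : Fin K → ℝ) (hs : ∀ k, 0 < s k ∧ s k < σ2)
    (m : ℝ) (hm : 1 / m = ∑ k, 1 / s k - ((K : ℝ) - 1) / σ2)
    (d : ℝ) (hmd : m < d) (hdσ : d < σ2) :
    0 < m ∧
    (∃! lam : ℝ, 0 < lam ∧
      ∑ k, min (1 / lam) (1 / s k - 1 / σ2) = 1 / m - 1 / d) ∧
    (∀ lam : ℝ, 0 < lam →
      ∑ k, min (1 / lam) (1 / s k - 1 / σ2) = 1 / m - 1 / d →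
      ∀ dk : Fin K → ℝ,
        (∀ k, 1 / dk k = 1 / s k - min (1 / lam) (1 / s k - 1 / σ2)) →
        (∀ k, s k ≤ dk k ∧ dk k ≤ σ2) ∧
        1 / d = ∑ k, 1 / dk k - ((K : ℝ) - 1) / σ2) := by
  have hne : Nonempty (Fin K) := ⟨⟨0, hK⟩⟩
  set a : Fin K → ℝ := fun k => 1 / s k - 1 / σ2 with ha
  have hapos : ∀ k, 0 < a k := by
    intro k
    have h1 := (hs k).1
    have h2 := (hs k).2
    have : 1 / σ2 < 1 / s k := one_div_lt_one_div_of_lt h1 h2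
    simpa [ha] using sub_pos.mpr this
  have hσinv : 0 < 1 / σ2 := by positivity
  have hsumS : ∑ k, (1:ℝ) / s k = ∑ k, a k + (K : ℝ) / σ2 := by
    have : ∑ k, a k = ∑ k, (1:ℝ) / s k - (K : ℝ) * (1 / σ2) := by
      simp [ha, Finset.sum_sub_distrib]
    rw [this]; ring
  have hminv : 1 / m = ∑ k, a k + 1 / σ2 := by
    rw [hm, hsumS]; ring
  have hsumA : 0 < ∑ k, a k :=
    Finset.sum_pos (fun k _ => hapos k) Finset.univ_nonempty
  have hmpos : 0 < m := by
    have : 0 < 1 / m := by rw [hminv]; positivity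
    exact one_div_pos.mp this
  have hdpos : 0 < d := lt_trans hmpos hmd
  have hT0 : 0 < 1 / m - 1 / d :=
    sub_pos.mpr (one_div_lt_one_div_of_lt hmpos hmd)
  have hTlt : 1 / m - 1 / d < ∑ k, a k := by
    have : 1 / σ2 < 1 / d := one_div_lt_one_div_of_lt hdpos hdσ
    linarith [hminv]
  set T : ℝ := 1 / m - 1 / d with hT
  set g : ℝ → ℝ := fun t => ∑ k, min t (a k) with hg
  have hgc : Continuous g :=
    continuous_finset_sum _ fun k _ => continuous_id.min continuous_const
  have hg0 : g 0 = 0 := by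
    simp [hg, fun k => min_eq_left (le_of_lt (hapos k))]
  have hgt0 : g (∑ k, a k) = ∑ k, a k := by
    apply Finset.sum_congr rfl
    intro k _
    exact min_eq_right (Finset.single_le_sum (fun i _ => le_of_lt (hapos i)) (Finset.mem_univ k))
  -- strict monotonicity where below the cap
  have hstrict : ∀ t1 t2 : ℝ, t1 < t2 → g t1 < ∑ k, a k → g t1 < g t2 := by
    intro t1 t2 h12 hlt
    have hk0 : ∃ k, min t1 (a k) < a k := by
      by_contra h
      push_neg at h
      have : g t1 = ∑ k, a k :=
        Finset.sum_congr rfl fun k _ => le_antisymm (min_le_right _ _) (h k)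
      linarith
    obtain ⟨k0, hk0⟩ := hk0
    have ht1a : t1 < a k0 := by
      by_contra h
      push_neg at h
      rw [min_eq_right h] at hk0
      exact lt_irrefl _ hk0
    apply Finset.sum_lt_sum
    · intro k _; exact min_le_min (le_of_lt h12) le_rfl
    · exact ⟨k0, Finset.mem_univ k0, by
        rw [min_eq_left (le_of_lt ht1a)]
        exact lt_min h12 ht1a⟩
  -- existence of t with g t = T
  obtain ⟨t, htmem, htval⟩ : ∃ t ∈ Set.Icc (0:ℝ) (∑ k, a k), g t = T := by
    have h1 : T ∈ Set.Icc (g 0) (g (∑ k, a k)) := by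
      rw [hg0, hgt0]; exact ⟨le_of_lt hT0, le_of_lt hTlt⟩
    have := intermediate_value_Icc (le_of_lt hsumA) hgc.continuousOn h1
    exact this
  have htpos : 0 < t := by
    rcases lt_or_eq_of_le htmem.1 with h | h
    · exact h
    · exfalso; rw [← h] at htval; rw [hg0] at htval; linarith
  refine ⟨hmpos, ⟨1 / t, ⟨by positivity, by
    rw [one_div_one_div]; exact htval⟩, ?_⟩, ?_⟩
  · -- uniqueness
    rintro lam ⟨hlam, hlamsum⟩
    have hglam : g (1 / lam) = T := hlamsum
    have hkey : 1 / lam = t := by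
      rcases lt_trichotomy (1 / lam) t with h | h | h
      · exfalso
        have := hstrict _ _ h (by rw [hglam]; exact hTlt)
        rw [hglam, htval] at this; linarith
      · exact h
      · exfalso
        have := hstrict _ _ h (by rw [htval]; exact hTlt)
        rw [hglam, htval] at this; linarith
    rw [← hkey, one_div_one_div]
  · -- third part
    intro lam hlam hlamsum dk hdk
    have hμnn : ∀ k, 0 ≤ min (1 / lam) (a k) :=
      fun k => le_min (by positivity) (le_of_lt (hapos k))
    have hμle : ∀ k, min (1 / lam) (a k) ≤ a k := fun k => min_le_right _ _
    have hbounds : ∀ k, 1 / σ2 ≤ 1 / dk k ∧ 1 / dk k ≤ 1 / s k := by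
      intro k
      have h := hdk k
      constructor
      · rw [h]; have := hμle k; simp only [ha] at this; linarith
      · rw [h]; linarith [hμnn k]
    have hdkpos : ∀ k, 0 < dk k := by
      intro k
      have : 0 < 1 / dk k := lt_of_lt_of_le hσinv (hbounds k).1
      exact one_div_pos.mp this
    constructor
    · intro k
      constructor
      · exact le_of_one_div_le_one_div (hdkpos k) (hbounds k).2
      · exact le_of_one_div_le_one_div hσ2 (hbounds k).1
    · have hsum : ∑ k, (1:ℝ) / dk k = ∑ k, (1:ℝ) / s k - ∑ k, min (1 / lam) (a k) := by
        rw [← Finset.sum_sub_distrib]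
        exact Finset.sum_congr rfl fun k _ => hdk k
      rw [hsum, hlamsum] at *
      linarith [hm]
end

section
/- Let K ≥ 1, let σ² > 0, and let s_1, …, s_K satisfy 0 < s_k < σ² for every k. Define m by 1/m = Σ_{k=1}^K 1/s_k − (K−1)/σ², and let d satisfy m < d < σ² together with 1/d ≥ 1/m + K/σ² − K·min_{k} (1/s_k). Then λ := K·(1/m − 1/d)^{−1} is positive and satisfies 1/λ ≤ 1/s_k − 1/σ² for every k (so that min{1/λ, 1/s_k − 1/σ²} = 1/λ for every k and Σ_{k=1}^K min{1/λ, 1/s_k − 1/σ²} = 1/m − 1/d), and the numbers d_k defined by 1/d_k = 1/s_k − 1/λ satisfy s_k < d_k ≤ σ² for every k and 1/d = Σ_{k=1}^K 1/d_k − (K−1)/σ². -/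
/-!
With `t = 1/m - 1/d > 0` the water level is `1/λ = t/K`, and the smallness condition on `d`
says precisely that `t ≤ K · minₖ (1/s k - 1/σ²)`, so the level lies below every
`1/s k - 1/σ²`: no minimum is capped, and the `K` equal shares add up to `t`. Hence
`1/d k = 1/s k - t/K` lies in `[1/σ², 1/s k)`, and summing these turns the defining identity of
`m` into the one for `d`.
-/

open Finset

lemma one_div_lt_sum_one_div_sub_card {ι : Type*} [Fintype ι] [Nonempty ι] {σ2 : ℝ}
    {s : ι → ℝ} (hs : ∀ k, 0 < s k ∧ s k < σ2) :
    1 / σ2 < ∑ k, 1 / s k - ((Fintype.card ι : ℝ) - 1) / σ2 := by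
  have hsum : ∑ _k : ι, 1 / σ2 < ∑ k, 1 / s k :=
    sum_lt_sum_of_nonempty univ_nonempty
      fun k _ => one_div_lt_one_div_of_lt (hs k).1 (hs k).2
  rw [sum_const, card_univ, nsmul_eq_mul] at hsum
  linarith [show ((Fintype.card ι : ℝ) - 1) / σ2 = Fintype.card ι * (1 / σ2) - 1 / σ2 by
    ring]

lemma div_card_le_sub_of_le_card_mul_inf'_sub {ι : Type*} {S : Finset ι} (hne : S.Nonempty)
    {f : ι → ℝ} {c t : ℝ} (h : t ≤ #S * (S.inf' hne f - c)) {k : ι} (hk : k ∈ S) :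
    t / #S ≤ f k - c := by
  have hcard : (0 : ℝ) < #S := by exact_mod_cast hne.card_pos
  rw [div_le_iff₀ hcard, mul_comm]
  exact h.trans <| mul_le_mul_of_nonneg_left (by linarith [inf'_le f hk]) hcard.le

lemma lt_and_le_of_one_div_eq_sub {s σ2 ℓ x : ℝ} (hσ2 : 0 < σ2) (hℓ : 0 < ℓ)
    (hle : 1 / ℓ ≤ 1 / s - 1 / σ2) (hx : 1 / x = 1 / s - 1 / ℓ) :
    s < x ∧ x ≤ σ2 := by
  have hσ2x : 1 / σ2 ≤ 1 / x := by linarith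
  have hx0 : 0 < x := one_div_pos.mp <| (one_div_pos.mpr hσ2).trans_le hσ2x
  have hxs : 1 / x < 1 / s := by linarith [one_div_pos.mpr hℓ]
  exact ⟨lt_of_one_div_lt_one_div hx0 hxs, le_of_one_div_le_one_div hσ2 hσ2x⟩

theorem stmt8_general (K : ℕ) (hK : 1 ≤ K) (σ2 : ℝ) (hσ2 : 0 < σ2)
    (s : Fin K → ℝ) (hs : ∀ k, 0 < s k ∧ s k < σ2)
    (m : ℝ) (hm : 1 / m = ∑ k, 1 / s k - ((K : ℝ) - 1) / σ2)
    (d : ℝ) (hmd : m < d)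
    (hne : (Finset.univ : Finset (Fin K)).Nonempty)
    (hsmall : 1 / m + (K : ℝ) / σ2
        - (K : ℝ) * Finset.univ.inf' hne (fun k => 1 / s k) ≤ 1 / d)
    (lam : ℝ) (hlam : lam = (K : ℝ) * (1 / m - 1 / d)⁻¹)
    (dk : Fin K → ℝ) (hdk : ∀ k, 1 / dk k = 1 / s k - 1 / lam) :
    0 < lam ∧
    (∀ k, 1 / lam ≤ 1 / s k - 1 / σ2) ∧
    (∀ k, min (1 / lam) (1 / s k - 1 / σ2) = 1 / lam) ∧
    (∑ k, min (1 / lam) (1 / s k - 1 / σ2) = 1 / m - 1 / d) ∧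
    (∀ k, s k < dk k ∧ dk k ≤ σ2) ∧
    1 / d = ∑ k, 1 / dk k - ((K : ℝ) - 1) / σ2 := by
  have hK0 : (0 : ℝ) < K := by exact_mod_cast hK
  have : NeZero K := ⟨by omega⟩
  have hσm : 1 / σ2 < 1 / m := by
    simpa only [hm, Fintype.card_fin] using one_div_lt_sum_one_div_sub_card hs
  have hm0 : 0 < m := one_div_pos.mp <| (one_div_pos.mpr hσ2).trans hσm
  have ht : 0 < 1 / m - 1 / d := sub_pos.mpr <| one_div_lt_one_div_of_lt hm0 hmd
  have hlam0 : 0 < lam := hlam ▸ mul_pos hK0 (inv_pos.mpr ht)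
  have hK_lam : (K : ℝ) * (1 / lam) = 1 / m - 1 / d := by
    rw [hlam]; field_simp
  have hle : ∀ k, 1 / lam ≤ 1 / s k - 1 / σ2 := by
    have hbudget :
        1 / m - 1 / d ≤ #(univ : Finset (Fin K)) * (univ.inf' hne (1 / s ·) - 1 / σ2) := by
      rw [card_univ, Fintype.card_fin, mul_sub]
      linarith [show (K : ℝ) / σ2 = K * (1 / σ2) by ring]
    intro k
    have := div_card_le_sub_of_le_card_mul_inf'_sub hne hbudget (mem_univ k)
    rwa [card_univ, Fintype.card_fin, ← hK_lam, mul_div_cancel_left₀ _ hK0.ne'] at this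
  have hmin : ∀ k, min (1 / lam) (1 / s k - 1 / σ2) = 1 / lam := fun k => min_eq_left (hle k)
  refine ⟨hlam0, hle, hmin, ?_,
    fun k => lt_and_le_of_one_div_eq_sub hσ2 hlam0 (hle k) (hdk k), ?_⟩
  · simp only [hmin, sum_const, card_univ, Fintype.card_fin, nsmul_eq_mul, hK_lam]
  · simp only [hdk, sum_sub_distrib, sum_const, card_univ, Fintype.card_fin, nsmul_eq_mul,
      hK_lam]
    linarith

/-- "All transmitters active" regime of the waterfilling allocation
for the causal Gaussian CEO problem.  Let `K ≥ 1`, `σ² > 0`, `0 < s k < σ²`, define `m`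
by `1/m = ∑ₖ 1/(s k) - (K-1)/σ²`, and let `d` satisfy `m < d < σ²` and
`1/d ≥ 1/m + K/σ² - K · minₖ (1/(s k))`.  Then `λ = K (1/m - 1/d)⁻¹` is positive and
satisfies `1/λ ≤ 1/(s k) - 1/σ²` for every `k` (so the waterfilling minima all equal
`1/λ` and sum to `1/m - 1/d`), and the numbers `d k` defined by
`1/(d k) = 1/(s k) - 1/λ` satisfy `s k < d k ≤ σ²` for every `k` and
`1/d = ∑ₖ 1/(d k) - (K-1)/σ²`. -/
theorem stmt8 (K : ℕ) (hK : 1 ≤ K) (σ2 : ℝ) (hσ2 : 0 < σ2)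
    (s : Fin K → ℝ) (hs : ∀ k, 0 < s k ∧ s k < σ2)
    (m : ℝ) (hm : 1 / m = ∑ k, 1 / s k - ((K : ℝ) - 1) / σ2)
    (d : ℝ) (hmd : m < d) (hdσ : d < σ2)
    (hne : (Finset.univ : Finset (Fin K)).Nonempty)
    (hsmall : 1 / m + (K : ℝ) / σ2
        - (K : ℝ) * Finset.univ.inf' hne (fun k => 1 / s k) ≤ 1 / d)
    (lam : ℝ) (hlam : lam = (K : ℝ) * (1 / m - 1 / d)⁻¹)
    (dk : Fin K → ℝ) (hdk : ∀ k, 1 / dk k = 1 / s k - 1 / lam) :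
    0 < lam ∧
    (∀ k, 1 / lam ≤ 1 / s k - 1 / σ2) ∧
    (∀ k, min (1 / lam) (1 / s k - 1 / σ2) = 1 / lam) ∧
    (∑ k, min (1 / lam) (1 / s k - 1 / σ2) = 1 / m - 1 / d) ∧
    (∀ k, s k < dk k ∧ dk k ≤ σ2) ∧
    1 / d = ∑ k, 1 / dk k - ((K : ℝ) - 1) / σ2 :=
  stmt8_general K hK σ2 hσ2 s hs m hm d hmd hne hsmall lam hlam dk hdk
end

section
/- Let K ≥ 1, let a ∈ ℝ with |a| < 1, let v > 0, and set σ² = v/(1 − a²). Let s_1, …, s_K satisfy 0 < s_k < σ² for every k, define m by 1/m = Σ_{k=1}^K 1/s_k − (K−1)/σ², and let d satisfy m < d < σ² and 1/d ≥ 1/m + K/σ² − K·min_k(1/s_k). Set λ = K·(1/m − 1/d)^{−1}, define d_k by 1/d_k = 1/s_k − 1/λ, and set d̄ = a²d + v and d̄_k = a²d_k + v. Then (1/2)·log(d̄/d) + Σ_{k=1}^K (1/2)·log( ((d̄_k − s_k)/(d_k − s_k)) · (d_k/d̄_k) ) ≤ (1/2)·log((d̄ − m)/(d − m)) + ((K−1)/2)·log(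 ((d̄ − m)/(d − m)) · (d/d̄) ), all arguments of the logarithms being positive. -/
set_option maxHeartbeats 1000000 in
/-- Rate loss due to isolated observers in the causal Gaussian CEO
problem:  with `σ² = v/(1-a²)`, per-channel steady-state causal MMSEs `s k`,
`1/m = ∑ₖ 1/(s k) - (K-1)/σ²`, target distortion `m < d < σ²` satisfying
`1/d ≥ 1/m + K/σ² - K · minₖ (1/(s k))`, waterfilling level `λ = K (1/m - 1/d)⁻¹`,
per-observer distortions `1/(d k) = 1/(s k) - 1/λ`, and prediction errors
`d̄ = a² d + v`, `d̄ₖ = a² (d k) + v`, one has (all log arguments being positive)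
`(1/2) log (d̄/d) + ∑ₖ (1/2) log (((d̄ₖ - s k)/(d k - s k)) (d k/d̄ₖ))`
`  ≤ (1/2) log ((d̄ - m)/(d - m)) + ((K-1)/2) log (((d̄ - m)/(d - m)) (d/d̄))`,
i.e. `R_CEO(d) ≤ R_rm(d) + (K-1) (R_rm(d) - R(d))`. -/
theorem stmt9 (K : ℕ) (hK : 1 ≤ K) (a v : ℝ) (ha : |a| < 1) (hv : 0 < v)
    (σ2 : ℝ) (hσ2 : σ2 = v / (1 - a ^ 2))
    (s : Fin K → ℝ) (hs : ∀ k, 0 < s k ∧ s k < σ2)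
    (m : ℝ) (hm : 1 / m = ∑ k, 1 / s k - ((K : ℝ) - 1) / σ2)
    (d : ℝ) (hmd : m < d) (hdσ : d < σ2)
    (hne : (Finset.univ : Finset (Fin K)).Nonempty)
    (hsmall : 1 / m + (K : ℝ) / σ2
        - (K : ℝ) * Finset.univ.inf' hne (fun k => 1 / s k) ≤ 1 / d)
    (lam : ℝ) (hlam : lam = (K : ℝ) * (1 / m - 1 / d)⁻¹)
    (dk : Fin K → ℝ) (hdk : ∀ k, 1 / dk k = 1 / s k - 1 / lam)
    (dbar : ℝ) (hdbar : dbar = a ^ 2 * d + v)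
    (dbark : Fin K → ℝ) (hdbark : ∀ k, dbark k = a ^ 2 * dk k + v) :
    (0 < d ∧ 0 < dbar ∧ 0 < d - m ∧ 0 < dbar - m ∧
      ∀ k, 0 < dk k ∧ 0 < dbark k ∧ 0 < dk k - s k ∧ 0 < dbark k - s k) ∧
    (1 / 2) * Real.log (dbar / d)
        + ∑ k, (1 / 2) * Real.log (((dbark k - s k) / (dk k - s k)) * (dk k / dbark k))
      ≤ (1 / 2) * Real.log ((dbar - m) / (d - m))
        + (((K : ℝ) - 1) / 2) * Real.log (((dbar - m) / (d - m)) * (d / dbar)) := by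
  have hK0 : (0:ℝ) < K := by exact_mod_cast hK
  have hKne : (K:ℝ) ≠ 0 := ne_of_gt hK0
  have ha2 : a ^ 2 < 1 := by nlinarith [sq_abs a, abs_nonneg a]
  have ha2n : (0:ℝ) ≤ a ^ 2 := sq_nonneg a
  have h1a : 0 < 1 - a ^ 2 := by linarith
  have hσ : 0 < σ2 := by rw [hσ2]; exact div_pos hv h1a
  have hv' : v = σ2 * (1 - a ^ 2) := by rw [hσ2]; field_simp [h1a.ne']
  have hσinv : 1 / σ2 = (1 - a ^ 2) / v := by rw [hσ2, one_div_div]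
  have hσinv0 : 0 < 1 / σ2 := one_div_pos.mpr hσ
  have hsσ : ∀ k, 1 / σ2 < 1 / s k := fun k => one_div_lt_one_div_of_lt (hs k).1 (hs k).2
  have hsum_s_lb : (K:ℝ) * (1/σ2) ≤ ∑ k, 1 / s k := by
    have h : ∑ _k : Fin K, 1/σ2 ≤ ∑ k, 1 / s k :=
      Finset.sum_le_sum (fun k _ => le_of_lt (hsσ k))
    simpa [Finset.sum_const, Finset.card_univ, nsmul_eq_mul] using h
  have hminv : 1/σ2 ≤ 1/m := by
    have hr : ((K:ℝ)-1)/σ2 = (K:ℝ)*(1/σ2) - 1/σ2 := by ring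
    rw [hm, hr]; linarith
  have hm0 : 0 < m := one_div_pos.mp (lt_of_lt_of_le hσinv0 hminv)
  have hd0 : 0 < d := hm0.trans hmd
  have hdbar0 : 0 < dbar := by
    have h1 : 0 ≤ a^2*d := mul_nonneg ha2n hd0.le
    rw [hdbar]; linarith
  have hdbard : d < dbar := by
    have h1 : a^2*d + v - d = (1-a^2)*(σ2 - d) := by rw [hv']; ring
    have h2 : 0 < (1-a^2)*(σ2-d) := mul_pos h1a (sub_pos.mpr hdσ)
    rw [hdbar]; linarith
  have hTpos : 0 < 1/m - 1/d := sub_pos.mpr (one_div_lt_one_div_of_lt hm0 hmd)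
  have hlam0 : 0 < lam := by rw [hlam]; exact mul_pos hK0 (inv_pos.mpr hTpos)
  have hKlam : (K:ℝ)/lam = 1/m - 1/d := by
    rw [hlam]; field_simp
  have hlaminv : (K:ℝ) * (1/lam) = 1/m - 1/d := by
    rw [← hKlam]; ring
  have hlaminv0 : 0 < 1/lam := one_div_pos.mpr hlam0
  have hlamk : ∀ k, 1/lam + 1/σ2 ≤ 1/s k := by
    intro k
    have hinf : Finset.univ.inf' hne (fun k => 1/s k) ≤ 1/s k :=
      Finset.inf'_le _ (Finset.mem_univ k)
    have hKs : (K:ℝ)/σ2 = (K:ℝ)*(1/σ2) := by ring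
    have h1 : (K:ℝ) * (1/lam + 1/σ2) ≤ (K:ℝ) * Finset.univ.inf' hne (fun k => 1/s k) := by
      rw [hKs] at hsmall
      have h2 : (K:ℝ)*(1/lam + 1/σ2) = (1/m - 1/d) + (K:ℝ)*(1/σ2) := by
        rw [mul_add, hlaminv]
      linarith
    have h2 := le_of_mul_le_mul_left h1 hK0
    linarith
  have hdkinv : ∀ k, 1/σ2 ≤ 1/dk k := by
    intro k; rw [hdk k]; linarith [hlamk k]
  have hdk0 : ∀ k, 0 < dk k := fun k =>
    one_div_pos.mp (lt_of_lt_of_le hσinv0 (hdkinv k))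
  have hdkσ : ∀ k, dk k ≤ σ2 := fun k => le_of_one_div_le_one_div hσ (hdkinv k)
  have hskdk : ∀ k, s k < dk k := by
    intro k
    have h1 : 1/dk k < 1/s k := by rw [hdk k]; linarith
    exact lt_of_one_div_lt_one_div (hdk0 k) h1
  have hdbark0 : ∀ k, 0 < dbark k := by
    intro k
    have h1 : 0 ≤ a^2*dk k := mul_nonneg ha2n (hdk0 k).le
    rw [hdbark k]; linarith
  have hdkdbark : ∀ k, dk k ≤ dbark k := by
    intro k
    have h1 : a^2*dk k + v - dk k = (1-a^2)*(σ2 - dk k) := by rw [hv']; ring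
    have h2 : 0 ≤ (1-a^2)*(σ2 - dk k) := mul_nonneg h1a.le (sub_nonneg.mpr (hdkσ k))
    rw [hdbark k]; linarith
  have hdm0 : 0 < d - m := sub_pos.mpr hmd
  have hdbarm0 : 0 < dbar - m := by linarith
  refine ⟨⟨hd0, hdbar0, hdm0, hdbarm0, fun k =>
    ⟨hdk0 k, hdbark0 k, sub_pos.mpr (hskdk k),
      by have := hskdk k; have := hdkdbark k; linarith⟩⟩, ?_⟩
  -- sum identities
  have hsum_s : ∑ k, 1/s k = 1/m + ((K:ℝ)-1)/σ2 := by rw [hm]; ring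
  have hsum_dk : ∑ k, 1/dk k = 1/d + ((K:ℝ)-1)/σ2 := by
    have h1 : ∑ k, 1/dk k = ∑ k, (1/s k - 1/lam) :=
      Finset.sum_congr rfl fun k _ => hdk k
    rw [h1, Finset.sum_sub_distrib, hsum_s, Finset.sum_const, Finset.card_univ,
      Fintype.card_fin, nsmul_eq_mul]
    linarith [hlaminv]
  -- key algebraic identity
  have hkey : ∀ x : ℝ, 0 < x →
      (a^2/v) * ((v/x - (1-a^2))/(a^2 + v/x)) = 1/(a^2*x+v) - 1/σ2 := by
    intro x hx
    have h2 : (0:ℝ) < a^2 + v/x := by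
      have := div_pos hv hx; linarith
    have h3 : (0:ℝ) < a^2*x + v := by
      have := mul_nonneg ha2n hx.le; linarith
    rw [hσinv]
    field_simp
    ring
  have ht0 : ∀ k, 0 ≤ v/dk k - (1-a^2) := by
    intro k
    have h1 : (1-a^2)/v ≤ 1/dk k := by rw [← hσinv]; exact hdkinv k
    have h2 : 1 - a^2 ≤ v * (1/dk k) := by
      calc 1 - a^2 = v * ((1-a^2)/v) := by field_simp
        _ ≤ v * (1/dk k) := mul_le_mul_of_nonneg_left h1 hv.le
    rw [mul_one_div] at h2
    linarith
  have hTsum : ∑ k, (v/dk k - (1-a^2)) = v/d - (1-a^2) := by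
    have h1 : ∑ k, (v/dk k - (1-a^2)) = v * (∑ k, 1/dk k) - (K:ℝ)*(1-a^2) := by
      rw [Finset.sum_sub_distrib, Finset.mul_sum, Finset.sum_const, Finset.card_univ,
        Fintype.card_fin, nsmul_eq_mul]
      congr 1
      exact Finset.sum_congr rfl fun k _ => (mul_one_div v (dk k)).symm
    have h2 : v * (1/σ2) = 1 - a^2 := by rw [hσinv]; field_simp
    have h3 : v * (1/d) = v/d := mul_one_div v d
    rw [h1, hsum_dk]
    linear_combination h3 + ((K:ℝ)-1) * h2
  have hT0 : 0 ≤ v/d - (1-a^2) := hTsum ▸ Finset.sum_nonneg fun k _ => ht0 k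
  -- step D : superadditivity of the prediction gain
  have hD : 1/dbar + ((K:ℝ)-1)/σ2 ≤ ∑ k, 1/dbark k := by
    have h1T : (0:ℝ) < 1 + (v/d - (1-a^2)) := by linarith
    have hper : ∀ k, (a^2/v) * ((v/dk k - (1-a^2))/(1 + (v/d - (1-a^2))))
        ≤ 1/(dbark k) - 1/σ2 := by
      intro k
      rw [hdbark k, ← hkey (dk k) (hdk0 k)]
      have h3 : a^2 + v/dk k = 1 + (v/dk k - (1-a^2)) := by ring
      have h2 : v/dk k - (1-a^2) ≤ v/d - (1-a^2) := by
        calc v/dk k - (1-a^2) ≤ ∑ j, (v/dk j - (1-a^2)) :=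
              Finset.single_le_sum (fun j _ => ht0 j) (Finset.mem_univ k)
          _ = _ := hTsum
      have h4 : (v/dk k - (1-a^2))/(1 + (v/d - (1-a^2)))
          ≤ (v/dk k - (1-a^2))/(a^2 + v/dk k) := by
        rw [h3]
        have h5 : (0:ℝ) < 1 + (v/dk k - (1-a^2)) := by linarith [ht0 k]
        exact div_le_div_of_nonneg_left (ht0 k) h5 (by linarith)
      exact mul_le_mul_of_nonneg_left h4 (div_nonneg ha2n hv.le)
    have hsum : ∑ k, (a^2/v) * ((v/dk k - (1-a^2))/(1 + (v/d - (1-a^2))))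
        ≤ ∑ k, (1/dbark k - 1/σ2) :=
      Finset.sum_le_sum fun k _ => hper k
    have hL : ∑ k, (a^2/v) * ((v/dk k - (1-a^2))/(1 + (v/d - (1-a^2))))
        = 1/dbar - 1/σ2 := by
      rw [hdbar, ← hkey d hd0]
      have h3 : a^2 + v/d = 1 + (v/d - (1-a^2)) := by ring
      rw [h3, ← Finset.mul_sum, ← Finset.sum_div, hTsum]
    rw [hL] at hsum
    have hR : ∑ k, (1/dbark k - 1/σ2) = ∑ k, 1/dbark k - (K:ℝ)*(1/σ2) := by
      rw [Finset.sum_sub_distrib, Finset.sum_const, Finset.card_univ,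
        Fintype.card_fin, nsmul_eq_mul]
    rw [hR] at hsum
    have hKs : ((K:ℝ)-1)/σ2 = (K:ℝ)*(1/σ2) - 1/σ2 := by ring
    linarith
  -- the u's and the AM-GM / tangent-line step
  have hu0 : ∀ k, 0 < 1/s k - 1/dbark k := by
    intro k
    have h1 : s k < dbark k := lt_of_lt_of_le (hskdk k) (hdkdbark k)
    have h2 := one_div_lt_one_div_of_lt (hs k).1 h1
    linarith
  have hmdbar : m < dbar := hmd.trans hdbard
  have hU0 : 0 < 1/m - 1/dbar := sub_pos.mpr (one_div_lt_one_div_of_lt hm0 hmdbar)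
  have husum : ∑ k, (1/s k - 1/dbark k) ≤ 1/m - 1/dbar := by
    rw [Finset.sum_sub_distrib, hsum_s]
    linarith [hD]
  have hc0 : 0 < (1/m - 1/dbar)/K := div_pos hU0 hK0
  have hC : ∑ k, Real.log (1/s k - 1/dbark k)
      ≤ (K:ℝ) * Real.log ((1/m - 1/dbar)/K) := by
    have hlogu : ∀ k, Real.log (1/s k - 1/dbark k)
        ≤ Real.log ((1/m - 1/dbar)/K) + (1/s k - 1/dbark k)/((1/m - 1/dbar)/K) - 1 := by
      intro k
      have h1 : 0 < (1/s k - 1/dbark k)/((1/m - 1/dbar)/K) := div_pos (hu0 k) hc0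
      have h2 := Real.log_le_sub_one_of_pos h1
      rw [Real.log_div (hu0 k).ne' hc0.ne'] at h2
      linarith
    calc ∑ k, Real.log (1/s k - 1/dbark k)
        ≤ ∑ k, (Real.log ((1/m - 1/dbar)/K) + (1/s k - 1/dbark k)/((1/m - 1/dbar)/K) - 1) :=
          Finset.sum_le_sum fun k _ => hlogu k
      _ = (K:ℝ)*Real.log ((1/m - 1/dbar)/K)
            + (∑ k, (1/s k - 1/dbark k))/((1/m - 1/dbar)/K) - K := by
          rw [Finset.sum_sub_distrib, Finset.sum_add_distrib, Finset.sum_const,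
            Finset.sum_const, Finset.card_univ, Fintype.card_fin, nsmul_eq_mul,
            nsmul_eq_mul, ← Finset.sum_div]
          ring
      _ ≤ (K:ℝ)*Real.log ((1/m - 1/dbar)/K)
            + (1/m - 1/dbar)/((1/m - 1/dbar)/K) - K := by
          have h9 := (div_le_div_iff_of_pos_right hc0).mpr husum
          linarith
      _ = (K:ℝ)*Real.log ((1/m - 1/dbar)/K) := by
          have h8 : (1/m - 1/dbar)/((1/m - 1/dbar)/K) = K := by
            rw [div_div_eq_mul_div, mul_comm, mul_div_assoc, div_self hU0.ne', mul_one]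
          rw [h8]; ring
  -- rewriting the log terms
  have hrw_k : ∀ k, Real.log (((dbark k - s k) / (dk k - s k)) * (dk k / dbark k))
      = Real.log (1/s k - 1/dbark k) - Real.log (1/lam) := by
    intro k
    have h6 : 1/s k - 1/dk k = 1/lam := by rw [hdk k]; ring
    have h2 : s k ≠ 0 := (hs k).1.ne'
    have h3 : dk k ≠ 0 := (hdk0 k).ne'
    have h4 : dbark k ≠ 0 := (hdbark0 k).ne'
    have h5 : dk k - s k ≠ 0 := (sub_pos.mpr (hskdk k)).ne'
    have h7 : 1/s k - 1/dk k ≠ 0 := by rw [h6]; exact hlaminv0.ne'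
    have h1 : ((dbark k - s k) / (dk k - s k)) * (dk k / dbark k)
        = (1/s k - 1/dbark k)/(1/lam) := by
      rw [← h6]
      field_simp
    rw [h1, Real.log_div (hu0 k).ne' hlaminv0.ne']
  have hKlam0 : (0:ℝ) < (K:ℝ)/lam := div_pos hK0 hlam0
  have hrw_main : Real.log (((dbar - m) / (d - m)) * (d / dbar))
      = Real.log (1/m - 1/dbar) - Real.log ((K:ℝ)/lam) := by
    have h2 : m ≠ 0 := hm0.ne'
    have h3 : d ≠ 0 := hd0.ne'
    have h4 : dbar ≠ 0 := hdbar0.ne'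
    have h5 : d - m ≠ 0 := hdm0.ne'
    have h7 : 1/m - 1/d ≠ 0 := hTpos.ne'
    have h1 : ((dbar - m) / (d - m)) * (d / dbar) = (1/m - 1/dbar)/((K:ℝ)/lam) := by
      rw [hKlam]
      field_simp
    rw [h1, Real.log_div hU0.ne' hKlam0.ne']
  have hrw_main2 : Real.log ((dbar - m) / (d - m))
      = Real.log (1/m - 1/dbar) - Real.log ((K:ℝ)/lam)
        + (Real.log dbar - Real.log d) := by
    have h0 : (d/dbar) * (dbar/d) = 1 := by
      field_simp
    have h1 : (dbar - m) / (d - m) = (((dbar - m) / (d - m)) * (d / dbar)) * (dbar/d) := by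
      rw [mul_assoc, h0, mul_one]
    have hA : (0:ℝ) < ((dbar - m) / (d - m)) * (d / dbar) :=
      mul_pos (div_pos hdbarm0 hdm0) (div_pos hd0 hdbar0)
    rw [h1, Real.log_mul hA.ne' (div_pos hdbar0 hd0).ne', hrw_main,
      Real.log_div hdbar0.ne' hd0.ne']
  have hsum_rw : ∑ k, (1 / 2 : ℝ) * Real.log (((dbark k - s k) / (dk k - s k)) * (dk k / dbark k))
      = (1/2) * (∑ k, Real.log (1/s k - 1/dbark k)) - (K:ℝ)*((1/2)*Real.log (1/lam)) := by
    calc ∑ k, (1 / 2 : ℝ) * Real.log (((dbark k - s k) / (dk k - s k)) * (dk k / dbark k))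
        = ∑ k, ((1/2)*Real.log (1/s k - 1/dbark k) - (1/2)*Real.log (1/lam)) := by
          refine Finset.sum_congr rfl fun k _ => ?_
          rw [hrw_k k]; ring
      _ = _ := by
          rw [Finset.sum_sub_distrib, Finset.sum_const, Finset.card_univ,
            Fintype.card_fin, nsmul_eq_mul, ← Finset.mul_sum]
  rw [Real.log_div hdbar0.ne' hd0.ne', hrw_main2, hrw_main, hsum_rw]
  have hli : Real.log (1/lam) = - Real.log lam := by rw [one_div, Real.log_inv]
  have hlK : Real.log ((K:ℝ)/lam) = Real.log K - Real.log lam :=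
    Real.log_div hKne hlam0.ne'
  have hlogc : Real.log ((1/m - 1/dbar)/K) = Real.log (1/m - 1/dbar) - Real.log K :=
    Real.log_div hU0.ne' hKne
  rw [hlogc] at hC
  rw [hli, hlK]
  linarith [hC]
end

section
/- Let K ≥ 1, let a ∈ ℝ with |a| < 1, let v > 0, and set σ² = v/(1 − a²). Let d_1, …, d_K satisfy 0 < d_k ≤ σ² for every k, and define d by 1/d = Σ_{k=1}^K 1/d_k − (K−1)/σ². Then 1/d ≥ 1/σ² > 0 (so d is well defined and 0 < d ≤ σ²), and 1/(a²·d + v) ≤ Σ_{k=1}^K 1/(a²·d_k + v) − (K−1)/σ². Moreover, if a ≠ 0, equality holds if and only if d_k = σ² for all but at most one index k. -/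
/-!
Write `s = 1/σ²` and `1/dₖ = s + xₖ` with `xₖ ≥ 0`, so that `1/d = s + ∑ₖ xₖ`. Since
`a² + v s = 1`, an estimation error `e` with `1/e = s + x` has prediction error satisfying
`1/(a² e + v) = s + a² φ(x)` with `φ(x) = x/(1 + v x)`. Both sides of the inequality are then
`s + a²·(…)`, and it reduces to `φ(∑ xₖ) ≤ ∑ φ(xₖ)`: the concave function `φ`, vanishing at `0`,
is subadditive on `[0, ∞)`, strictly so on `(0, ∞)` when `v > 0`. Equality therefore forces all
but one `xₖ` to vanish.
-/

open Finset

lemma div_one_add_mul_add_le {v x y : ℝ} (hv : 0 ≤ v) (hx : 0 ≤ x) (hy : 0 ≤ y) :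
    (x + y) / (1 + v * (x + y)) ≤ x / (1 + v * x) + y / (1 + v * y) := by
  have hA : 0 < 1 + v * x := by positivity
  have hB : 0 < 1 + v * y := by positivity
  have hC : 0 < 1 + v * (x + y) := by positivity
  -- after cross-multiplying, the two sides differ by exactly this quantity
  have hgap : 0 ≤ v * x * y * (2 + v * x + v * y) := by positivity
  rw [div_add_div _ _ hA.ne' hB.ne', div_le_div_iff₀ hC (by positivity)]
  linear_combination hgap

lemma div_one_add_mul_add_lt {v x y : ℝ} (hv : 0 < v) (hx : 0 < x) (hy : 0 < y) :
    (x + y) / (1 + v * (x + y)) < x / (1 + v * x) + y / (1 + v * y) := by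
  have hA : 0 < 1 + v * x := by positivity
  have hB : 0 < 1 + v * y := by positivity
  have hC : 0 < 1 + v * (x + y) := by positivity
  have hgap : 0 < v * x * y * (2 + v * x + v * y) := by positivity
  rw [div_add_div _ _ hA.ne' hB.ne', div_lt_div_iff₀ hC (by positivity)]
  linear_combination hgap

section Subadditive

variable {ι : Type*} {f : ℝ → ℝ}

lemma map_sum_lt_sum_map_of_strictSubadditive [DecidableEq ι] (h_zero : f 0 = 0)
    (h_add : ∀ x y, 0 ≤ x → 0 ≤ y → f (x + y) ≤ f x + f y)
    (h_add_lt : ∀ x y, 0 < x → 0 < y → f (x + y) < f x + f y)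
    {s : Finset ι} {x : ι → ℝ} (hx : ∀ i ∈ s, 0 ≤ x i) {i j : ι} (hi : i ∈ s) (hj : j ∈ s)
    (hij : i ≠ j) (hxi : 0 < x i) (hxj : 0 < x j) :
    f (∑ k ∈ s, x k) < ∑ k ∈ s, f (x k) := by
  have hx' : ∀ k ∈ s.erase j, 0 ≤ x k := fun k hk => hx k (mem_of_mem_erase hk)
  have hrest : 0 < ∑ k ∈ s.erase j, x k :=
    hxi.trans_le (single_le_sum hx' (mem_erase.mpr ⟨hij, hi⟩))
  rw [← add_sum_erase s x hj, ← add_sum_erase s (fun k => f (x k)) hj]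
  calc f (x j + ∑ k ∈ s.erase j, x k)
      < f (x j) + f (∑ k ∈ s.erase j, x k) := h_add_lt _ _ hxj hrest
    _ ≤ f (x j) + ∑ k ∈ s.erase j, f (x k) := by
        gcongr
        exact le_sum_of_subadditive_on_pred f (0 ≤ ·) h_zero.le h_add
          (fun _ _ => add_nonneg) x hx'

lemma map_sum_eq_sum_map_iff_of_strictSubadditive [Fintype ι] [Nonempty ι] (h_zero : f 0 = 0)
    (h_add : ∀ x y, 0 ≤ x → 0 ≤ y → f (x + y) ≤ f x + f y)
    (h_add_lt : ∀ x y, 0 < x → 0 < y → f (x + y) < f x + f y)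
    {x : ι → ℝ} (hx : ∀ i, 0 ≤ x i) :
    f (∑ i, x i) = ∑ i, f (x i) ↔ ∃ i₀, ∀ i, i ≠ i₀ → x i = 0 := by
  classical
  constructor
  · intro heq
    by_contra! hspread
    obtain ⟨i, -, hxi⟩ := hspread (Classical.arbitrary ι)
    obtain ⟨j, hji, hxj⟩ := hspread i
    exact heq.not_lt <| map_sum_lt_sum_map_of_strictSubadditive h_zero h_add h_add_lt
      (fun k _ => hx k) (mem_univ i) (mem_univ j) hji.symm
      ((hx i).lt_of_ne' hxi) ((hx j).lt_of_ne' hxj)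
  · rintro ⟨i₀, hzero⟩
    rw [Fintype.sum_eq_single i₀ hzero,
      Fintype.sum_eq_single i₀ fun i hi => by rw [hzero i hi, h_zero]]

end Subadditive

lemma one_div_mul_add_eq {c v s e : ℝ} (hc : 0 ≤ c) (hv : 0 < v) (he : 0 < e)
    (hcs : c + v * s = 1) :
    1 / (c * e + v) = s + c * ((1 / e - s) / (1 + v * (1 / e - s))) := by
  have hden : 1 + v * (1 / e - s) = (c * e + v) / e := by
    field_simp
    linear_combination (-e) * hcs
  have hpos : 0 < c * e + v := by positivity
  rw [hden]
  field_simp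
  linear_combination (-1 : ℝ) * hcs

/-- Let `K ≥ 1`, `|a| < 1`, `v > 0`, and `σ² = v/(1 - a²)` (the
stationary variance of the Gauss–Markov source, so `a² σ² + v = σ²`).  Let
`0 < d k ≤ σ²` for every `k` and define `d` by `1/d = ∑ₖ 1/(d k) - (K-1)/σ²`.
Then `1/d ≥ 1/σ² > 0` (so `d` is well defined with `0 < d ≤ σ²`), and
`1/(a² d + v) ≤ ∑ₖ 1/(a² (d k) + v) - (K-1)/σ²`.  Moreover if `a ≠ 0` then equality
holds if and only if `d k = σ²` for all but at most one index `k`. -/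
theorem stmt10 (K : ℕ) (hK : 1 ≤ K) (a v : ℝ) (ha : |a| < 1) (hv : 0 < v)
    (σ2 : ℝ) (hσ2 : σ2 = v / (1 - a ^ 2))
    (dk : Fin K → ℝ) (hdk : ∀ k, 0 < dk k ∧ dk k ≤ σ2)
    (d : ℝ) (hd : 1 / d = ∑ k, 1 / dk k - ((K : ℝ) - 1) / σ2) :
    (1 / σ2 ≤ 1 / d ∧ 0 < 1 / d ∧ 0 < d ∧ d ≤ σ2) ∧
    1 / (a ^ 2 * d + v) ≤ ∑ k, 1 / (a ^ 2 * dk k + v) - ((K : ℝ) - 1) / σ2 ∧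
    (a ≠ 0 →
      (1 / (a ^ 2 * d + v) = ∑ k, 1 / (a ^ 2 * dk k + v) - ((K : ℝ) - 1) / σ2 ↔
        ∃ k0, ∀ k, k ≠ k0 → dk k = σ2)) := by
  have hσ2pos : 0 < σ2 := by
    rw [hσ2]
    exact div_pos hv (sub_pos.mpr ((sq_lt_one_iff_abs_lt_one a).mpr ha))
  set s := 1 / σ2 with hs
  have hcs : a ^ 2 + v * s = 1 := by
    rw [hs, hσ2]
    field_simp
    ring
  set x : Fin K → ℝ := fun k => 1 / dk k - s with hx_def
  have hx : ∀ k, 0 ≤ x k := fun k =>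
    sub_nonneg.mpr (one_div_le_one_div_of_le (hdk k).1 (hdk k).2)
  have hKs : ((K : ℝ) - 1) / σ2 = (K - 1) * s := by rw [hs, mul_one_div]
  have hd' : 1 / d = s + ∑ k, x k := by
    simp only [hd, hKs, hx_def, sum_sub_distrib, sum_const, card_univ, Fintype.card_fin,
      nsmul_eq_mul]
    ring
  have hσ2d : 1 / σ2 ≤ 1 / d := by
    rw [hd']
    exact le_add_of_nonneg_right (sum_nonneg fun k _ => hx k)
  have hd_pos : 0 < d := one_div_pos.mp ((one_div_pos.mpr hσ2pos).trans_le hσ2d)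
  set φ : ℝ → ℝ := fun t => t / (1 + v * t) with hφ
  have hlhs : 1 / (a ^ 2 * d + v) = s + a ^ 2 * φ (∑ k, x k) := by
    rw [one_div_mul_add_eq (sq_nonneg a) hv hd_pos hcs, hd', add_sub_cancel_left]
  have hrhs : ∑ k, 1 / (a ^ 2 * dk k + v) - ((K : ℝ) - 1) / σ2
      = s + a ^ 2 * ∑ k, φ (x k) := by
    simp only [one_div_mul_add_eq (sq_nonneg a) hv (hdk _).1 hcs, hKs, sum_add_distrib,
      sum_const, card_univ, Fintype.card_fin, nsmul_eq_mul, ← mul_sum]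
    ring
  have hφ_add : ∀ x y, 0 ≤ x → 0 ≤ y → φ (x + y) ≤ φ x + φ y := fun _ _ =>
    div_one_add_mul_add_le hv.le
  refine ⟨⟨hσ2d, one_div_pos.mpr hd_pos, hd_pos, (one_div_le_one_div hσ2pos hd_pos).mp hσ2d⟩,
    ?_, fun ha0 => ?_⟩
  · rw [hlhs, hrhs]
    gcongr
    exact le_sum_of_subadditive_on_pred φ (0 ≤ ·) (by simp [hφ]) hφ_add
      (fun _ _ => add_nonneg) x fun k _ => hx k
  · have : Nonempty (Fin K) := ⟨⟨0, hK⟩⟩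
    rw [hlhs, hrhs, add_right_inj, mul_right_inj' (pow_ne_zero 2 ha0),
      map_sum_eq_sum_map_iff_of_strictSubadditive (by simp [hφ]) hφ_add
        (fun _ _ => div_one_add_mul_add_lt hv) hx]
    simp only [hx_def, hs, sub_eq_zero, one_div, inv_inj]
end
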